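/- A prime q belongs to the set P'' = {p_k : k ∈ P'} if and only if its iterated prime-index depth d(q) is even; that is, P'' coincides with the alternating-sum construction {p^{(2)}} − {p^{(3)}} + {p^{(4)}} − ..., which retains exactly those primes occurring in an even number (at least two) of the higher-order prime subsequences. -/
import Mathlib


/-- `nthPrime n` is the n-th prime with `nthPrime 1 = 2`. -/
noncomputable def nthPrime (n : ℕ) : ℕ := Nat.nth Nat.Prime (n - 1)

/-- 0-indexed index sequence of the sieve: `sieveIdx 0 = k_1 = 1`, and
`sieveIdx n = k_{n+1}` is the least natural number greater than `k_n` that does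
not occur among the previously produced values `p'_1, ..., p'_n`. -/
noncomputable def sieveIdx : ℕ → ℕ
  | 0 => 1
  | n + 1 => sInf {m : ℕ | sieveIdx n < m ∧ ∀ i ≤ n, nthPrime (sieveIdx i) ≠ m}

/-- `pP n = p'_n` (for `n ≥ 1`), the n-th term of the sieve sequence P'. -/
noncomputable def pP (n : ℕ) : ℕ := nthPrime (sieveIdx (n - 1))


lemma primeCounting_lt_self : ∀ q : ℕ, 2 ≤ q → Nat.primeCounting q < q := by
  intro q hq
  induction q with
  | zero => omega
  | succ n ih =>
    rcases Nat.lt_or_ge n 2 with h | h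
    · interval_cases n
      · omega
      · decide
    · have h1 := ih h
      have h2 : Nat.primeCounting (n + 1) ≤ Nat.primeCounting n + 1 := by
        show Nat.count Nat.Prime (n + 1 + 1) ≤ Nat.count Nat.Prime (n + 1) + 1
        rw [Nat.count_succ]
        split <;> omega
      omega

/-- The iterated prime-index depth: `depth q = 1` if `π(q)` is not prime, and
`depth q = 1 + depth (π q)` if `π(q)` is prime. -/
def depth (q : ℕ) : ℕ :=
  if h : (Nat.primeCounting q).Prime then 1 + depth (Nat.primeCounting q) else 1
decreasing_by
  have h2 : 2 ≤ q := by
    by_contra hq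
    push_neg at hq
    interval_cases q <;> revert h <;> decide
  exact primeCounting_lt_self q h2

/-- The sieve set P' = {p'_n : n ≥ 1}. -/
noncomputable def PprimeSet : Set ℕ := Set.range (fun n : ℕ => nthPrime (sieveIdx n))

/-- P'' = {p_k : k ∈ P'}. -/
noncomputable def PdoublePrimeSet : Set ℕ := nthPrime '' PprimeSet

section Aux

lemma nthPrime_prime (n : ℕ) : (nthPrime n).Prime := Nat.prime_nth_prime _

lemma two_le_nthPrime (n : ℕ) : 2 ≤ nthPrime n := (nthPrime_prime n).two_le

lemma lt_nthPrime (k : ℕ) : k ≤ nthPrime k := by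
  have := Nat.add_two_le_nth_prime (k - 1)
  unfold nthPrime
  omega

lemma primeCounting_nthPrime {k : ℕ} (hk : 1 ≤ k) : Nat.primeCounting (nthPrime k) = k := by
  show Nat.primeCounting' (Nat.nth Nat.Prime (k - 1) + 1) = k
  rw [Nat.primeCounting']
  rw [Nat.count_nth_succ_of_infinite Nat.infinite_setOf_prime]
  omega

lemma primeCounting_eq_count_add_one {q : ℕ} (hq : q.Prime) :
    Nat.primeCounting q = Nat.count Nat.Prime q + 1 := by
  show Nat.primeCounting' (q + 1) = _
  rw [Nat.primeCounting', Nat.count_succ, if_pos hq]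

lemma nthPrime_primeCounting {q : ℕ} (hq : q.Prime) : nthPrime (Nat.primeCounting q) = q := by
  rw [nthPrime, primeCounting_eq_count_add_one hq]
  simp [Nat.nth_count hq]

lemma one_le_primeCounting {q : ℕ} (hq : q.Prime) : 1 ≤ Nat.primeCounting q := by
  rw [primeCounting_eq_count_add_one hq]; omega

lemma sieve_spec (n : ℕ) :
    sieveIdx (n + 1) ∈ {m : ℕ | sieveIdx n < m ∧ ∀ i ≤ n, nthPrime (sieveIdx i) ≠ m} := by
  rw [sieveIdx]
  apply Nat.sInf_mem
  refine ⟨(Finset.range (n + 1)).sup (fun i => nthPrime (sieveIdx i)) + sieveIdx n + 1,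
    by omega, fun i hi => ?_⟩
  have : nthPrime (sieveIdx i) ≤ (Finset.range (n + 1)).sup (fun i => nthPrime (sieveIdx i)) :=
    Finset.le_sup (f := fun i => nthPrime (sieveIdx i)) (Finset.mem_range.mpr (by omega))
  omega

lemma sieve_mono : StrictMono sieveIdx :=
  strictMono_nat_of_lt_succ fun n => (sieve_spec n).1

lemma one_le_sieveIdx (n : ℕ) : 1 ≤ sieveIdx n := by
  have : sieveIdx 0 ≤ sieveIdx n := sieve_mono.monotone (Nat.zero_le n)
  rw [sieveIdx] at this
  omega

lemma sieve_avoid (n j : ℕ) : nthPrime (sieveIdx j) ≠ sieveIdx n := by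
  cases n with
  | zero =>
    have := two_le_nthPrime (sieveIdx j)
    rw [sieveIdx]; omega
  | succ n =>
    rcases le_or_gt j n with h | h
    · exact (sieve_spec n).2 j h
    · have h1 : sieveIdx (n + 1) ≤ sieveIdx j := sieve_mono.monotone h
      have h2 : sieveIdx j < nthPrime (sieveIdx j) := by
        have := lt_nthPrime (sieveIdx j)
        have := primeCounting_nthPrime (one_le_sieveIdx j)
        have h3 := primeCounting_lt_self (nthPrime (sieveIdx j)) (two_le_nthPrime _)
        omega
      omega

lemma sieve_surj {m : ℕ} (hm : 1 ≤ m) (h : ∀ j, nthPrime (sieveIdx j) ≠ m) :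
    ∃ n, sieveIdx n = m := by
  have hex : ∃ n, m < sieveIdx n := by
    refine ⟨m + 1, ?_⟩
    have : m + 1 ≤ sieveIdx (m + 1) := sieve_mono.le_apply
    omega
  have hfind := Nat.find_spec hex
  have hne : Nat.find hex ≠ 0 := by
    intro h0
    rw [h0, sieveIdx] at hfind
    omega
  obtain ⟨n, hn⟩ : ∃ n, Nat.find hex = n + 1 := ⟨Nat.find hex - 1, by omega⟩
  have hle : ¬ m < sieveIdx n := Nat.find_min hex (by omega)
  rcases eq_or_lt_of_le (not_lt.mp hle) with heq | hlt
  · exact ⟨n, heq⟩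
  · exfalso
    rw [hn] at hfind
    have : sieveIdx (n + 1) ≤ m := by
      rw [sieveIdx]
      exact Nat.sInf_le ⟨hlt, fun i _ => h i⟩
    omega

end Aux

lemma mem_PprimeSet_prime {q : ℕ} (h : q ∈ PprimeSet) : q.Prime := by
  obtain ⟨n, rfl⟩ := h
  exact nthPrime_prime _

lemma mem_PprimeSet_iff {q : ℕ} (hq : q.Prime) :
    q ∈ PprimeSet ↔ Nat.primeCounting q ∉ PprimeSet := by
  constructor
  · rintro ⟨n, rfl⟩
    simp only at *
    rw [primeCounting_nthPrime (one_le_sieveIdx n)]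
    rintro ⟨j, hj⟩
    exact sieve_avoid n j hj
  · intro h
    have h1 : ∀ j, nthPrime (sieveIdx j) ≠ Nat.primeCounting q := by
      intro j hj
      exact h ⟨j, hj⟩
    obtain ⟨n, hn⟩ := sieve_surj (one_le_primeCounting hq) h1
    exact ⟨n, by simp [hn, nthPrime_primeCounting hq]⟩

lemma mem_PprimeSet_iff_odd : ∀ q : ℕ, q.Prime → (q ∈ PprimeSet ↔ Odd (depth q)) := by
  intro q
  induction q using Nat.strong_induction_on with
  | _ q ih =>
    intro hq
    rw [mem_PprimeSet_iff hq, depth]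
    by_cases hp : (Nat.primeCounting q).Prime
    · rw [dif_pos hp]
      have hlt := primeCounting_lt_self q hq.two_le
      rw [ih _ hlt hp]
      rw [Nat.odd_add]
      simp [Nat.not_odd_iff_even, Nat.not_even_iff_odd]
    · rw [dif_neg hp]
      have hni : Nat.primeCounting q ∉ PprimeSet := fun hmem => hp (mem_PprimeSet_prime hmem)
      simp [hni, Nat.odd_iff]

/-- A prime q belongs to P'' = {p_k : k ∈ P'} if and only if its iterated
prime-index depth d(q) is even. -/
theorem stmt9 (q : ℕ) (hq : q.Prime) : q ∈ PdoublePrimeSet ↔ Even (depth q) := by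
  constructor
  · rintro ⟨r, hr, rfl⟩
    have hrp : r.Prime := mem_PprimeSet_prime hr
    have hodd : Odd (depth r) := (mem_PprimeSet_iff_odd r hrp).mp hr
    have hpc : Nat.primeCounting (nthPrime r) = r := primeCounting_nthPrime hrp.one_lt.le
    rw [depth, hpc, dif_pos hrp]
    obtain ⟨k, hk⟩ := hodd
    exact ⟨k + 1, by omega⟩
  · intro hev
    rw [depth] at hev
    by_cases hp : (Nat.primeCounting q).Prime
    · rw [dif_pos hp] at hev
      have hodd : Odd (depth (Nat.primeCounting q)) := by
        rcases Nat.even_or_odd (depth (Nat.primeCounting q)) with h | h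
        · exfalso
          rw [Nat.even_iff] at hev h
          omega
        · exact h
      have hmem : Nat.primeCounting q ∈ PprimeSet := (mem_PprimeSet_iff_odd _ hp).mpr hodd
      exact ⟨Nat.primeCounting q, hmem, nthPrime_primeCounting hq⟩
    · rw [dif_neg hp] at hev
      exact absurd hev (by decide)
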